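/- Let H be an inner product space over 𝕂 (ℝ or ℂ) and let x, y₁,…,yₙ ∈ H. Then ∑_{i=1}^n |⟨x, yᵢ⟩|² ≤ ‖x‖² · (∑_{i,j=1}^n |⟨yᵢ, yⱼ⟩|²)^{1/2}. -/

import Mathlib

/-!
Put `z = ∑ i, conj ⟪x, yᵢ⟫ • yᵢ`, so that `S := ∑ i, ‖⟪x, yᵢ⟫‖² = ⟪x, z⟫ ≤ ‖x‖ ‖z‖`. Expanding
`‖z‖²` over the Gram matrix and applying Cauchy–Schwarz to the `n²` entries gives
`‖z‖² ≤ S · (∑ i j, ‖⟪yᵢ, yⱼ⟫‖²)^{1/2}`. Squaring the first bound and dividing by `S` gives the claim.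
-/

open Finset

section GramBound

variable {𝕜 H ι : Type*} [RCLike 𝕜] [NormedAddCommGroup H] [InnerProductSpace 𝕜 H] [Fintype ι]

theorem inner_sum_conj_inner_smul (x : H) (y : ι → H) :
    (inner 𝕜 x (∑ i, starRingEnd 𝕜 (inner 𝕜 x (y i)) • y i) : 𝕜) =
      ((∑ i, ‖(inner 𝕜 x (y i) : 𝕜)‖ ^ 2 : ℝ) : 𝕜) := by
  push_cast
  simp only [inner_sum, inner_smul_right, RCLike.conj_mul]

theorem norm_sum_smul_sq_le_sum_sum (c : ι → 𝕜) (y : ι → H) :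
    ‖∑ i, c i • y i‖ ^ 2 ≤ ∑ i, ∑ j, ‖c i‖ * ‖c j‖ * ‖(inner 𝕜 (y i) (y j) : 𝕜)‖ := by
  have hexpand : (inner 𝕜 (∑ i, c i • y i) (∑ j, c j • y j) : 𝕜) =
      ∑ i, ∑ j, starRingEnd 𝕜 (c i) * (c j * inner 𝕜 (y i) (y j)) := by
    simp_rw [sum_inner, inner_sum, inner_smul_left, inner_smul_right]
  calc ‖∑ i, c i • y i‖ ^ 2 = RCLike.re (inner 𝕜 (∑ i, c i • y i) (∑ j, c j • y j) : 𝕜) :=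
        (inner_self_eq_norm_sq _).symm
    _ ≤ ‖(inner 𝕜 (∑ i, c i • y i) (∑ j, c j • y j) : 𝕜)‖ := RCLike.re_le_norm _
    _ ≤ ∑ i, ∑ j, ‖c i‖ * ‖c j‖ * ‖(inner 𝕜 (y i) (y j) : 𝕜)‖ := by
        rw [hexpand]
        refine (norm_sum_le _ _).trans (sum_le_sum fun i _ => ?_)
        refine (norm_sum_le _ _).trans (sum_le_sum fun j _ => ?_)
        simp only [norm_mul, RCLike.norm_conj, mul_assoc, le_refl]

/-- The Hilbert–Schmidt norm of the Gram matrix bounds its operator norm. -/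
theorem norm_sum_smul_sq_le (c : ι → 𝕜) (y : ι → H) :
    ‖∑ i, c i • y i‖ ^ 2 ≤
      (∑ i, ‖c i‖ ^ 2) * Real.sqrt (∑ i, ∑ j, ‖(inner 𝕜 (y i) (y j) : 𝕜)‖ ^ 2) := by
  have hCS := Real.sum_mul_le_sqrt_mul_sqrt (univ : Finset (ι × ι))
    (fun p => ‖c p.1‖ * ‖c p.2‖) (fun p => ‖(inner 𝕜 (y p.1) (y p.2) : 𝕜)‖)
  have hprod : ∑ i, ∑ j, (‖c i‖ * ‖c j‖) ^ 2 = (∑ i, ‖c i‖ ^ 2) ^ 2 := by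
    simp only [mul_pow, sq (∑ i, ‖c i‖ ^ 2), sum_mul_sum]
  simp only [← univ_product_univ, sum_product] at hCS
  rw [hprod, Real.sqrt_sq (sum_nonneg fun i _ => by positivity)] at hCS
  exact (norm_sum_smul_sq_le_sum_sum c y).trans hCS

end GramBound

theorem le_sq_mul_of_le_mul_of_sq_le {S a w B : ℝ} (hS : 0 ≤ S) (hB : 0 ≤ B)
    (hSw : S ≤ a * w) (hw : w ^ 2 ≤ S * B) : S ≤ a ^ 2 * B := by
  rcases hS.eq_or_lt with rfl | hpos
  · positivity
  · refine le_of_mul_le_mul_right ?_ hpos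
    calc S * S ≤ (a * w) ^ 2 := by nlinarith
      _ = a ^ 2 * w ^ 2 := by ring
      _ ≤ a ^ 2 * (S * B) := by gcongr
      _ = a ^ 2 * B * S := by ring

theorem stmt_18 {𝕜 H : Type*} [RCLike 𝕜] [NormedAddCommGroup H] [InnerProductSpace 𝕜 H]
    {n : ℕ} (x : H) (y : Fin n → H) :
    ∑ i, ‖(inner 𝕜 x (y i) : 𝕜)‖ ^ 2 ≤ ‖x‖ ^ 2 * Real.sqrt (∑ i, ∑ j, ‖(inner 𝕜 (y i) (y j) : 𝕜)‖ ^ 2) := by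
  set c : Fin n → 𝕜 := fun i => starRingEnd 𝕜 (inner 𝕜 x (y i))
  set S := ∑ i, ‖(inner 𝕜 x (y i) : 𝕜)‖ ^ 2
  have hS : 0 ≤ S := sum_nonneg fun i _ => by positivity
  have hSx : S ≤ ‖x‖ * ‖∑ i, c i • y i‖ := by
    calc S = ‖(S : 𝕜)‖ := by rw [RCLike.norm_ofReal, abs_of_nonneg hS]
      _ = ‖(inner 𝕜 x (∑ i, c i • y i) : 𝕜)‖ := by rw [inner_sum_conj_inner_smul]
      _ ≤ ‖x‖ * ‖∑ i, c i • y i‖ := norm_inner_le_norm _ _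
  have hc : ∑ i, ‖c i‖ ^ 2 = S := by simp only [c, RCLike.norm_conj]; rfl
  have hz := norm_sum_smul_sq_le c y
  rw [hc] at hz
  exact le_sq_mul_of_le_mul_of_sq_le hS (Real.sqrt_nonneg _) hSx hz
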